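/- Let k be a field, R = k[x,y], R^{S₂} ⊆ R the subalgebra of symmetric polynomials, B = R⊗_{R^{S₂}}R, and δ_B the k-linear endomorphism of B with δ_B(f⊗g) = δ(f)⊗g + f⊗δ(g), where δ is the derivation of R with δ(x)=x², δ(y)=y². Set w := (y−x)⊗1 + 1⊗(y−x) ∈ B. Then: (i) f·w = w·f for every f ∈ R, so φ : R → B, f ↦ f·w, is a homomorphism of (R,R)-bimodules; (ii) δ_B(w) + y·w + w·y = (x+3y)·w. (Hence φ : R^{x+3y} → {}^{y}B^{y} is a morphism of (R,R)#H_q-modules; this is the key equivariance check in the proof of invariance under the second Markov move.) -/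
import Mathlib


open MvPolynomial TensorProduct

/-- `R = k[x,y]` (`x = X 0`, `y = X 1`). -/
noncomputable abbrev stmt18R (k : Type) [Field k] := MvPolynomial (Fin 2) k

/-- `R^{S₂}`, the subalgebra of symmetric polynomials. -/
noncomputable abbrev stmt18S (k : Type) [Field k] : Subalgebra k (stmt18R k) :=
  MvPolynomial.symmetricSubalgebra (Fin 2) k

/-- The Soergel bimodule `B = R ⊗_{R^{S₂}} R`. -/
noncomputable abbrev stmt18B (k : Type) [Field k] :=
  (stmt18R k) ⊗[↥(stmt18S k)] (stmt18R k)

/-- `w = (y−x)⊗1 + 1⊗(y−x) ∈ B`. -/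
noncomputable abbrev stmt18w (k : Type) [Field k] : stmt18B k :=
  ((X 1 - X 0 : stmt18R k) ⊗ₜ[↥(stmt18S k)] (1 : stmt18R k))
    + ((1 : stmt18R k) ⊗ₜ[↥(stmt18S k)] (X 1 - X 0 : stmt18R k))

section Aux
variable (k : Type) [Field k]

set_option maxHeartbeats 1000000 in
/-- Symmetric elements move across the tensor product over `R^{S₂}`. -/
lemma stmt18_move (p : stmt18R k) (hp : p ∈ stmt18S k) (u v : stmt18R k) :
    (p * u) ⊗ₜ[↥(stmt18S k)] v = u ⊗ₜ[↥(stmt18S k)] (p * v) := by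
  have hps : (p ⊗ₜ[↥(stmt18S k)] (1 : stmt18R k)) = (1 : stmt18R k) ⊗ₜ[↥(stmt18S k)] p := by
    have h1 := Algebra.TensorProduct.algebraMap_apply (R := ↥(stmt18S k)) (S := ↥(stmt18S k))
      (A := stmt18R k) (B := stmt18R k) (⟨p, hp⟩ : ↥(stmt18S k))
    have h2 := Algebra.TensorProduct.algebraMap_apply' (R := ↥(stmt18S k))
      (A := stmt18R k) (B := stmt18R k) (⟨p, hp⟩ : ↥(stmt18S k))
    have h3 : algebraMap (↥(stmt18S k)) (stmt18R k) (⟨p, hp⟩ : ↥(stmt18S k)) = p := rfl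
    rw [h3] at h1 h2
    exact h1.symm.trans h2
  calc (p * u) ⊗ₜ[↥(stmt18S k)] v
      = (p ⊗ₜ[↥(stmt18S k)] (1 : stmt18R k)) * (u ⊗ₜ[↥(stmt18S k)] v) := by
        rw [Algebra.TensorProduct.tmul_mul_tmul, one_mul]
    _ = ((1 : stmt18R k) ⊗ₜ[↥(stmt18S k)] p) * (u ⊗ₜ[↥(stmt18S k)] v) := by rw [hps]
    _ = u ⊗ₜ[↥(stmt18S k)] (p * v) := by
        rw [Algebra.TensorProduct.tmul_mul_tmul, one_mul]

lemma stmt18_e1 : (X 0 + X 1 : stmt18R k) ∈ stmt18S k := by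
  rw [mem_symmetricSubalgebra]
  intro σ
  have h01 : σ 0 ≠ σ 1 := fun h => absurd (σ.injective h) (by decide)
  simp only [map_add, rename_X]
  rcases Fin.exists_fin_two.mp ⟨σ 0, rfl⟩ with h | h <;>
    rcases Fin.exists_fin_two.mp ⟨σ 1, rfl⟩ with h' | h' <;>
      first
        | (exact absurd (h.trans h'.symm) h01)
        | (rw [h, h']; try ring)

lemma stmt18_e2 : (X 0 * X 1 : stmt18R k) ∈ stmt18S k := by
  rw [mem_symmetricSubalgebra]
  intro σ
  have h01 : σ 0 ≠ σ 1 := fun h => absurd (σ.injective h) (by decide)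
  simp only [map_mul, rename_X]
  rcases Fin.exists_fin_two.mp ⟨σ 0, rfl⟩ with h | h <;>
    rcases Fin.exists_fin_two.mp ⟨σ 1, rfl⟩ with h' | h' <;>
      first
        | (exact absurd (h.trans h'.symm) h01)
        | (rw [h, h']; try ring)

lemma stmt18_C (r : k) : (C r : stmt18R k) ∈ stmt18S k := by
  rw [mem_symmetricSubalgebra]
  intro σ
  simp

end Aux

set_option maxHeartbeats 2000000 in
set_option synthInstance.maxHeartbeats 2000000 in
/-- with `w = (y−x)⊗1 + 1⊗(y−x) ∈ B`:
(i) `f·w = w·f` for all `f ∈ R` (left action via the first factor, right action via the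
second factor), so `φ : R → B, f ↦ f·w`, is an `(R,R)`-bimodule map; and
(ii) `δ_B(w) + y·w + w·y = (x+3y)·w`.
Here `δ` is the derivation of `R` with `δ(x)=x²`, `δ(y)=y²`, and `δ_B` is the `k`-linear
endomorphism of `B` with `δ_B(f⊗g) = δ(f)⊗g + f⊗δ(g)`. -/
theorem stmt_18 (k : Type) [Field k]
    (δ : Derivation k (stmt18R k) (stmt18R k))
    (hx : δ (X 0) = X 0 ^ 2) (hy : δ (X 1) = X 1 ^ 2)
    (δB : stmt18B k →ₗ[k] stmt18B k)
    (hδB : ∀ f g : stmt18R k,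
      δB (f ⊗ₜ[↥(stmt18S k)] g)
        = (δ f) ⊗ₜ[↥(stmt18S k)] g + f ⊗ₜ[↥(stmt18S k)] (δ g)) :
    (∀ f : stmt18R k,
        (f ⊗ₜ[↥(stmt18S k)] (1 : stmt18R k)) * stmt18w k
          = ((1 : stmt18R k) ⊗ₜ[↥(stmt18S k)] f) * stmt18w k) ∧
    δB (stmt18w k)
        + ((X 1 : stmt18R k) ⊗ₜ[↥(stmt18S k)] (1 : stmt18R k)) * stmt18w k
        + ((1 : stmt18R k) ⊗ₜ[↥(stmt18S k)] (X 1 : stmt18R k)) * stmt18w k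
      = ((X 0 + 3 * X 1 : stmt18R k) ⊗ₜ[↥(stmt18S k)] (1 : stmt18R k)) * stmt18w k := by
  classical
  set a : stmt18B k := (X 0 : stmt18R k) ⊗ₜ[↥(stmt18S k)] (1 : stmt18R k) with ha
  set b : stmt18B k := (1 : stmt18R k) ⊗ₜ[↥(stmt18S k)] (X 0 : stmt18R k) with hb
  set c : stmt18B k := (X 1 : stmt18R k) ⊗ₜ[↥(stmt18S k)] (1 : stmt18R k) with hc
  set d : stmt18B k := (1 : stmt18R k) ⊗ₜ[↥(stmt18S k)] (X 1 : stmt18R k) with hd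
  have h1 : a * c = b * d := by
    rw [ha, hb, hc, hd]
    simp only [Algebra.TensorProduct.tmul_mul_tmul, one_mul, mul_one]
    simpa using stmt18_move k _ (stmt18_e2 k) 1 1
  have h2 : a + c = b + d := by
    have h := stmt18_move k _ (stmt18_e1 k) 1 1
    simp only [mul_one, add_tmul, tmul_add] at h
    exact h
  have hw : stmt18w k = c - a + (d - b) := by
    show ((X 1 - X 0 : stmt18R k) ⊗ₜ[↥(stmt18S k)] (1 : stmt18R k))
      + ((1 : stmt18R k) ⊗ₜ[↥(stmt18S k)] (X 1 - X 0 : stmt18R k)) = _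
    rw [sub_tmul, tmul_sub]
  have gx : a * stmt18w k = b * stmt18w k := by
    rw [hw]; linear_combination 2 * h1 - (a + b) * h2
  have gy : c * stmt18w k = d * stmt18w k := by
    rw [hw]; linear_combination (-2) * h1 + (c + d) * h2
  constructor
  · intro f
    induction f using MvPolynomial.induction_on with
    | C r =>
        have hC : ((C r : stmt18R k) ⊗ₜ[↥(stmt18S k)] (1 : stmt18R k))
            = (1 : stmt18R k) ⊗ₜ[↥(stmt18S k)] (C r : stmt18R k) := by
          simpa using stmt18_move k _ (stmt18_C k r) 1 1
        rw [hC]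
    | add p q hp hq => rw [add_tmul, tmul_add, add_mul, add_mul, hp, hq]
    | mul_X p i hp =>
        have hXi : ((X i : stmt18R k) ⊗ₜ[↥(stmt18S k)] (1 : stmt18R k)) * stmt18w k
            = ((1 : stmt18R k) ⊗ₜ[↥(stmt18S k)] (X i : stmt18R k)) * stmt18w k := by
          fin_cases i
          · exact gx
          · exact gy
        have e1 : ((p * X i : stmt18R k) ⊗ₜ[↥(stmt18S k)] (1 : stmt18R k))
            = (p ⊗ₜ[↥(stmt18S k)] (1 : stmt18R k))
              * ((X i : stmt18R k) ⊗ₜ[↥(stmt18S k)] (1 : stmt18R k)) := by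
          rw [Algebra.TensorProduct.tmul_mul_tmul, mul_one]
        have e2 : ((1 : stmt18R k) ⊗ₜ[↥(stmt18S k)] (p * X i : stmt18R k))
            = ((1 : stmt18R k) ⊗ₜ[↥(stmt18S k)] p)
              * ((1 : stmt18R k) ⊗ₜ[↥(stmt18S k)] (X i : stmt18R k)) := by
          rw [Algebra.TensorProduct.tmul_mul_tmul, mul_one]
        rw [e1, e2]
        linear_combination ((X i : stmt18R k) ⊗ₜ[↥(stmt18S k)] (1 : stmt18R k)) * hp
          + ((1 : stmt18R k) ⊗ₜ[↥(stmt18S k)] p) * hXi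
  · have hδw : δB (stmt18w k) = (c * c - a * a) + (d * d - b * b) := by
      have hl := hδB (X 1 - X 0) 1
      have hr := hδB 1 (X 1 - X 0)
      have hδ1 : δ (1 : stmt18R k) = 0 := Derivation.map_one_eq_zero δ
      have hδs : δ (X 1 - X 0 : stmt18R k) = X 1 ^ 2 - X 0 ^ 2 := by rw [map_sub, hx, hy]
      have hcc : c * c = (X 1 ^ 2 : stmt18R k) ⊗ₜ[↥(stmt18S k)] (1 : stmt18R k) := by
        rw [hc, Algebra.TensorProduct.tmul_mul_tmul, one_mul, ← sq]
      have haa : a * a = (X 0 ^ 2 : stmt18R k) ⊗ₜ[↥(stmt18S k)] (1 : stmt18R k) := by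
        rw [ha, Algebra.TensorProduct.tmul_mul_tmul, one_mul, ← sq]
      have hdd : d * d = (1 : stmt18R k) ⊗ₜ[↥(stmt18S k)] (X 1 ^ 2 : stmt18R k) := by
        rw [hd, Algebra.TensorProduct.tmul_mul_tmul, one_mul, ← sq]
      have hbb : b * b = (1 : stmt18R k) ⊗ₜ[↥(stmt18S k)] (X 0 ^ 2 : stmt18R k) := by
        rw [hb, Algebra.TensorProduct.tmul_mul_tmul, one_mul, ← sq]
      have hwdef : stmt18w k
          = ((X 1 - X 0 : stmt18R k) ⊗ₜ[↥(stmt18S k)] (1 : stmt18R k))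
            + ((1 : stmt18R k) ⊗ₜ[↥(stmt18S k)] (X 1 - X 0 : stmt18R k)) := rfl
      rw [hwdef, map_add, hl, hr, hδ1, hδs, hcc, haa, hdd, hbb]
      simp only [tmul_zero, zero_tmul, add_zero, zero_add, sub_tmul, tmul_sub, sub_zero]
    have h3 : ((X 0 + 3 * X 1 : stmt18R k) ⊗ₜ[↥(stmt18S k)] (1 : stmt18R k))
        = a + (c + c + c) := by
      rw [show (X 0 + 3 * X 1 : stmt18R k) = X 0 + (X 1 + (X 1 + X 1)) by ring,
        add_tmul, add_tmul, add_tmul, ha, hc]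
      ring
    rw [hδw, hw, h3]
    linear_combination 2 * h1 + (b - c - 2 * d) * h2
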